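/- Let {C(x) | x ∈ Ω} be a family of pairwise commuting diagonalizable n×n complex matrices. Then there exists a single matrix b ∈ M_n(ℂ) such that every C(x) is a polynomial in b. -/

import Mathlib

/-!
The matrices act on `ℂⁿ` as commuting semisimple endomorphisms, so `ℂⁿ` is the direct sum of their
joint eigenspaces `V χ = ⋂ₓ ker (C x - χ x)`, only finitely many of which are nonzero. Let `b` act
on the nonzero `V χ` by pairwise distinct scalars `c χ`; then `C x = p(b)` for the Lagrange
interpolation polynomial `p` with `p (c χ) = χ x`.
-/

open Polynomial

/-- A square complex matrix is diagonalizable if it is similar to a diagonal matrix. -/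
def IsDiagonalizableM {n : ℕ} (A : Matrix (Fin n) (Fin n) ℂ) : Prop :=
  ∃ P D : Matrix (Fin n) (Fin n) ℂ, IsUnit P.det ∧ D.IsDiag ∧ A = P * D * P⁻¹

namespace Module.End

lemma exists_apply_eq_smul_of_isInternal {R V ι : Type*} [CommSemiring R] [AddCommMonoid V]
    [Module R V] [DecidableEq ι] {W : ι → Submodule R V} (hW : DirectSum.IsInternal W)
    (c : ι → R) : ∃ g : End R V, ∀ i, ∀ v ∈ W i, g v = c i • v := by
  refine ⟨DirectSum.toModule R ι V (fun i => c i • (W i).subtype) ∘ₗ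
    (LinearEquiv.ofBijective (DirectSum.coeLinearMap W) hW).symm, fun i v hv => ?_⟩
  have : (LinearEquiv.ofBijective (DirectSum.coeLinearMap W) hW).symm v =
      DirectSum.lof R ι (W ·) i ⟨v, hv⟩ := by
    rw [LinearEquiv.symm_apply_eq]
    exact (DirectSum.coeLinearMap_of W i ⟨v, hv⟩).symm
  simp [this]

variable {K V : Type*} [Field K] [AddCommGroup V] [Module K V]

theorem exists_forall_eq_aeval_of_isInternal [Infinite K] {ι Ω : Type*} [Finite ι] [DecidableEq ι]
    {W : ι → Submodule K V} (hW : DirectSum.IsInternal W) (f : Ω → End K V) (a : Ω → ι → K)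
    (hf : ∀ x i, ∀ v ∈ W i, f x v = a x i • v) : ∃ g : End K V, ∀ x, ∃ p : K[X], f x = aeval g p := by
  cases nonempty_fintype ι
  obtain ⟨c, hc⟩ : ∃ c : ι → K, Function.Injective c :=
    let ⟨e, he⟩ := Countable.exists_injective_nat ι
    ⟨Infinite.natEmbedding K ∘ e, (Infinite.natEmbedding K).injective.comp he⟩
  obtain ⟨g, hg⟩ := exists_apply_eq_smul_of_isInternal hW c
  refine ⟨g, fun x => ⟨Lagrange.interpolate Finset.univ c (a x), ?_⟩⟩
  rw [eq_comm, ← sub_eq_zero, ← LinearMap.ker_eq_top, eq_top_iff, ← hW.submodule_iSup_eq_top]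
  refine iSup_le fun i v hv => ?_
  rw [LinearMap.mem_ker, LinearMap.sub_apply, aeval_apply_of_mem_apply_eq_smul (hg i v hv),
    Lagrange.eval_interpolate_at_node _ hc.injOn (Finset.mem_univ i), hf x i v hv, sub_self]

open scoped Classical in
theorem isInternal_iInf_eigenspace_of_commute [IsAlgClosed K] [FiniteDimensional K V] {Ω : Type*}
    (f : Ω → End K V) (hcomm : ∀ x y, Commute (f x) (f y)) (hss : ∀ x, (f x).IsSemisimple) :
    DirectSum.IsInternal fun χ : Ω → K => ⨅ x, (f x).eigenspace (χ x) := by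
  have hgen : ∀ x μ, (f x).maxGenEigenspace μ = (f x).eigenspace μ := fun x =>
    (hss x).isFinitelySemisimple.maxGenEigenspace_eq_eigenspace
  simp only [← hgen]
  exact DirectSum.isInternal_submodule_of_iSupIndep_of_iSup_eq_top
    (independent_iInf_maxGenEigenspace_of_forall_mapsTo f fun x y μ =>
      mapsTo_maxGenEigenspace_of_comm (hcomm y x) μ)
    (iSup_iInf_maxGenEigenspace_eq_top_of_iSup_maxGenEigenspace_eq_top_of_commute f
      (fun x y _ => hcomm x y) fun x => iSup_maxGenEigenspace_eq_top (f x))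

theorem exists_forall_eq_aeval_of_commute_of_isSemisimple [IsAlgClosed K] [FiniteDimensional K V]
    {Ω : Type*} (f : Ω → End K V) (hcomm : ∀ x y, Commute (f x) (f y))
    (hss : ∀ x, (f x).IsSemisimple) : ∃ g : End K V, ∀ x, ∃ p : K[X], f x = aeval g p := by
  classical
  have hW := isInternal_iInf_eigenspace_of_commute f hcomm hss
  let := hW.submodule_iSupIndep.fintypeNeBotOfFiniteDimensional
  exact exists_forall_eq_aeval_of_isInternal (DirectSum.isInternal_ne_bot_iff.mpr hW) f
    (fun x χ => χ.1 x) fun x χ v hv => mem_eigenspace_iff.mp ((Submodule.mem_iInf _).mp hv x)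

end Module.End

lemma Matrix.isSemisimple_toLin'_diagonal {K ι : Type*} [Field K] [Fintype ι] [DecidableEq ι]
    (d : ι → K) : Module.End.IsSemisimple (Matrix.toLin' (Matrix.diagonal d)) := by
  classical
  refine Module.End.isSemisimple_of_squarefree_aeval_eq_zero
    (p := ∏ μ ∈ Finset.univ.image d, (X - C μ))
    (separable_prod_X_sub_C_iff'.mpr fun _ _ _ _ => id).squarefree ?_
  have hd : aeval d (∏ μ ∈ Finset.univ.image d, (X - C μ)) = 0 := by
    ext i
    simp [aeval_fn_apply, Finset.prod_eq_zero_iff, sub_eq_zero]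
  change aeval (toLinAlgEquiv' (diagonalAlgHom K d)) _ = 0
  rw [aeval_algHom_apply, aeval_algHom_apply, hd, map_zero, map_zero]

lemma IsDiagonalizableM.isSemisimple_toLin' {n : ℕ} {A : Matrix (Fin n) (Fin n) ℂ}
    (h : IsDiagonalizableM A) : Module.End.IsSemisimple (Matrix.toLin' A) := by
  obtain ⟨P, D, hP, hD, rfl⟩ := h
  let := P.invertibleOfIsUnitDet hP
  have hPD : P * D = P * D * P⁻¹ * P := by simp [Matrix.mul_assoc]
  refine ((P.toLinearEquiv' this).isSemisimple_iff _ _ ?_).mp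
    (hD.diagonal_diag ▸ Matrix.isSemisimple_toLin'_diagonal D.diag)
  rw [Matrix.toLinearEquiv'_apply, ← Matrix.toLin'_mul, ← Matrix.toLin'_mul, ← hPD]

/-- For a family of pairwise commuting diagonalizable `n × n` complex matrices, there is a single
matrix `b` such that every member of the family is a polynomial in `b`. -/
theorem stmt3 {n : ℕ} {Ω : Type*} (C : Ω → Matrix (Fin n) (Fin n) ℂ)
    (hcomm : ∀ x y : Ω, C x * C y = C y * C x)
    (hdiag : ∀ x : Ω, IsDiagonalizableM (C x)) :
    ∃ b : Matrix (Fin n) (Fin n) ℂ, ∀ x : Ω, ∃ p : ℂ[X], C x = aeval b p := by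
  obtain ⟨g, hg⟩ := Module.End.exists_forall_eq_aeval_of_commute_of_isSemisimple
    (fun x => Matrix.toLin' (C x))
    (fun x y => (show Commute (C x) (C y) from hcomm x y).map Matrix.toLinAlgEquiv')
    (fun x => (hdiag x).isSemisimple_toLin')
  refine ⟨Matrix.toLinAlgEquiv'.symm g, fun x => ?_⟩
  obtain ⟨p, hp⟩ := hg x
  refine ⟨p, Matrix.toLinAlgEquiv'.injective ?_⟩
  rw [aeval_algHom_apply, AlgEquiv.apply_symm_apply]
  exact hp
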